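/- arXiv:2505.15921 — 3 statements merged into one kernel-verified Lean document; each statement's English description precedes it below -/
import Mathlib

section
/- (Proposition 1) Suppose all events are uniquely modifying and the causal order is compatible with real time. Then for every correct snapshot s satisfying quasi-instantaneous consistency, the cut of s is causally consistent. -/
/-! Both the acquisition time of a region and the common time `t` of the snapshot see the same
memory value, so by unique modification an event lies in the cut exactly when it happened by
time `t`. A cut of the form `{e | rt e ≤ t}` is causally consistent once the causal order
is compatible with real time. -/

section Snapshot

variable {R V E : Type*} {m : R → ℕ → V} {reg : E → R} {rt : E → ℕ}

theorem rt_le_snapshotTime_iff_of_quasiInstantaneous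
    (huniq : ∀ (r : R) (t t' : ℕ), m r t = m r t' →
      ∀ e, reg e = r → (rt e ≤ t ↔ rt e ≤ t'))
    {s : R → V × ℕ} (hcorrect : ∀ r, (s r).1 = m r (s r).2)
    {t : ℕ} (ht : ∀ r, (s r).1 = m r t) (e : E) :
    rt e ≤ (s (reg e)).2 ↔ rt e ≤ t :=
  huniq (reg e) _ t ((hcorrect (reg e)).symm.trans (ht (reg e))) e rfl

theorem rt_le_of_prec_of_rt_le {prec : E → E → Prop}
    (hcompat : ∀ e f, prec e f → rt e ≤ rt f) {t : ℕ} {e e' : E}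
    (he : rt e ≤ t) (hprec : prec e' e) : rt e' ≤ t :=
  (hcompat e' e hprec).trans he

end Snapshot

theorem quasiInstantaneous_implies_causallyConsistent_general
    (R V E : Type*) (m : R → ℕ → V)
    (reg : E → R) (rt : E → ℕ) (prec : E → E → Prop)
    (hcompat : ∀ e f, prec e f → rt e ≤ rt f)
    (huniq : ∀ (r : R) (t t' : ℕ), m r t = m r t' →
      ∀ e, reg e = r → (rt e ≤ t ↔ rt e ≤ t'))
    (s : R → V × ℕ)
    (hcorrect : ∀ r, (s r).1 = m r (s r).2)
    (hquasi : ∃ t : ℕ, ∀ r, (s r).1 = m r t) :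
    ∀ e ∈ {e : E | rt e ≤ (s (reg e)).2},
      ∀ e', prec e' e → e' ∈ {e : E | rt e ≤ (s (reg e)).2} := by
  obtain ⟨t, ht⟩ := hquasi
  have hcut := rt_le_snapshotTime_iff_of_quasiInstantaneous huniq hcorrect ht
  intro e he e' hprec
  exact (hcut e').2 (rt_le_of_prec_of_rt_le hcompat ((hcut e).1 he) hprec)

/-- (Proposition 1) If all events are uniquely modifying and the causal order is
compatible with real time, then for every correct snapshot `s` satisfying
quasi-instantaneous consistency, the cut of `s` is causally consistent. -/
theorem quasiInstantaneous_implies_causallyConsistent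
    (R V E : Type*) (m : R → ℕ → V)
    (reg : E → R) (rt : E → ℕ) (prec : E → E → Prop)
    (htrans : Transitive prec)
    (hcompat : ∀ e f, prec e f → rt e ≤ rt f)
    (huniq : ∀ (r : R) (t t' : ℕ), m r t = m r t' →
      ∀ e, reg e = r → (rt e ≤ t ↔ rt e ≤ t'))
    (s : R → V × ℕ)
    (hcorrect : ∀ r, (s r).1 = m r (s r).2)
    (hquasi : ∃ t : ℕ, ∀ r, (s r).1 = m r t) :
    ∀ e ∈ {e : E | rt e ≤ (s (reg e)).2},
      ∀ e', prec e' e → e' ∈ {e : E | rt e ≤ (s (reg e)).2} :=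
  quasiInstantaneous_implies_causallyConsistent_general R V E m reg rt prec hcompat huniq s hcorrect
    hquasi
end

section
/- Suppose every event is modifying and the causal order is compatible with real time. Let τ be a time and let s be a snapshot whose acquisition times all satisfy τ ≤ s(r).t. If s satisfies restrictive integrity with respect to τ, then the cut of s equals the set {e : E | rt e ≤ τ}, and in particular the cut of s is causally consistent. -/
/-! A modifying event changes its region's memory at its own time, whereas restrictive integrity
freezes each region's memory on `[τ, s(r).t]`. So no event of the cut can occur strictly after `τ`,
and the cut is the set of events at times `≤ τ`, which is causally consistent because the causal
order never goes backwards in real time. -/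

section Snapshot

variable {R V E : Type*}

def RestrictiveIntegrity (m : R → ℕ → V) (τ : ℕ) (s : R → V × ℕ) : Prop :=
  ∀ r, τ ≤ (s r).2 → ∀ t', τ ≤ t' → t' ≤ (s r).2 → (s r).1 = m r t'

def cut (reg : E → R) (rt : E → ℕ) (s : R → V × ℕ) : Set E :=
  {e | rt e ≤ (s (reg e)).2}

def IsCausallyConsistent (prec : E → E → Prop) (S : Set E) : Prop :=
  ∀ e ∈ S, ∀ e', prec e' e → e' ∈ S

theorem eq_apply_sub_one_of_forall_Icc_eq {f : ℕ → V} {v : V} {τ T t : ℕ}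
    (h : ∀ t', τ ≤ t' → t' ≤ T → v = f t') (hτt : τ < t) (htT : t ≤ T) :
    f t = f (t - 1) :=
  (h t hτt.le htT).symm.trans (h (t - 1) (by omega) (by omega))

theorem cut_eq_setOf_rt_le {m : R → ℕ → V} {reg : E → R} {rt : E → ℕ} {τ : ℕ} {s : R → V × ℕ}
    (hmod : ∀ e : E, 0 < rt e → m (reg e) (rt e) ≠ m (reg e) (rt e - 1))
    (hτ : ∀ r, τ ≤ (s r).2) (hrestr : RestrictiveIntegrity m τ s) :
    cut reg rt s = {e | rt e ≤ τ} := by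
  ext e
  refine ⟨fun he => ?_, fun he => he.trans (hτ _)⟩
  by_contra hnot
  have hlt : τ < rt e := not_le.mp hnot
  exact hmod e (by omega) (eq_apply_sub_one_of_forall_Icc_eq (hrestr _ (hτ _)) hlt he)

theorem isCausallyConsistent_setOf_rt_le {prec : E → E → Prop} {rt : E → ℕ}
    (hcompat : ∀ e f, prec e f → rt e ≤ rt f) (τ : ℕ) :
    IsCausallyConsistent prec {e | rt e ≤ τ} :=
  fun e he e' hprec => (hcompat e' e hprec).trans he

end Snapshot

theorem restrictiveIntegrity_cut_eq_and_causallyConsistent_general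
    (R V E : Type*) (m : R → ℕ → V)
    (reg : E → R) (rt : E → ℕ) (prec : E → E → Prop)
    (hcompat : ∀ e f, prec e f → rt e ≤ rt f)
    (hmod : ∀ e : E, 0 < rt e → m (reg e) (rt e) ≠ m (reg e) (rt e - 1))
    (τ : ℕ) (s : R → V × ℕ)
    (hτ : ∀ r, τ ≤ (s r).2)
    (hrestr : ∀ r, τ ≤ (s r).2 → ∀ t', τ ≤ t' → t' ≤ (s r).2 → (s r).1 = m r t') :
    {e : E | rt e ≤ (s (reg e)).2} = {e : E | rt e ≤ τ} ∧
      ∀ e ∈ {e : E | rt e ≤ (s (reg e)).2},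
        ∀ e', prec e' e → e' ∈ {e : E | rt e ≤ (s (reg e)).2} := by
  have hcut : cut reg rt s = {e | rt e ≤ τ} := cut_eq_setOf_rt_le hmod hτ hrestr
  refine ⟨hcut, ?_⟩
  change IsCausallyConsistent prec (cut reg rt s)
  exact hcut ▸ isCausallyConsistent_setOf_rt_le hcompat τ

/-- If every event is modifying, the causal order is compatible with real time,
all acquisition times of `s` satisfy `τ ≤ s(r).t`, and `s` satisfies restrictive
integrity with respect to `τ`, then the cut of `s` equals `{e | rt e ≤ τ}` and,
in particular, the cut of `s` is causally consistent. -/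
theorem restrictiveIntegrity_cut_eq_and_causallyConsistent
    (R V E : Type*) (m : R → ℕ → V)
    (reg : E → R) (rt : E → ℕ) (prec : E → E → Prop)
    (htrans : Transitive prec)
    (hcompat : ∀ e f, prec e f → rt e ≤ rt f)
    (hmod : ∀ e : E, 0 < rt e → m (reg e) (rt e) ≠ m (reg e) (rt e - 1))
    (τ : ℕ) (s : R → V × ℕ)
    (hτ : ∀ r, τ ≤ (s r).2)
    (hrestr : ∀ r, τ ≤ (s r).2 → ∀ t', τ ≤ t' → t' ≤ (s r).2 → (s r).1 = m r t') :
    {e : E | rt e ≤ (s (reg e)).2} = {e : E | rt e ≤ τ} ∧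
      ∀ e ∈ {e : E | rt e ≤ (s (reg e)).2},
        ∀ e', prec e' e → e' ∈ {e : E | rt e ≤ (s (reg e)).2} :=
  restrictiveIntegrity_cut_eq_and_causallyConsistent_general R V E m reg rt prec hcompat hmod τ s hτ
    hrestr
end

section
/- (Sufficiency of the realtime-clock criterion) Suppose memory changes only at events. Let s be a correct snapshot and let t_max be a time such that for every region r, s(r).t ≤ t_max and no event e with reg e = r satisfies s(r).t < rt e ≤ t_max. Then s satisfies quasi-instantaneous consistency (witnessed by the time t_max). -/
theorem Nat.apply_eq_of_forall_succ_eq {α : Type*} {f : ℕ → α} {a b : ℕ} (hab : a ≤ b)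
    (h : ∀ t, a ≤ t → t < b → f (t + 1) = f t) : f b = f a := by
  induction b, hab using Nat.le_induction with
  | base => rfl
  | succ n han ih =>
    rw [h n han n.lt_succ_self, ih fun t hat htn => h t hat (htn.trans n.lt_succ_self)]

theorem memory_eq_of_no_event_between {R V E : Type*} {m : R → ℕ → V} {reg : E → R}
    {rt : E → ℕ} (hchange : ∀ (r : R) (t : ℕ), m r (t + 1) ≠ m r t →
      ∃ e : E, reg e = r ∧ rt e = t + 1)
    {r : R} {a b : ℕ} (hab : a ≤ b) (hnoev : ¬ ∃ e : E, reg e = r ∧ a < rt e ∧ rt e ≤ b) :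
    m r b = m r a := by
  refine Nat.apply_eq_of_forall_succ_eq hab fun t hat htb => ?_
  by_contra hne
  obtain ⟨e, he_reg, he_rt⟩ := hchange r t hne
  exact hnoev ⟨e, he_reg, by omega, by omega⟩

/-- (Sufficiency of the realtime-clock criterion) If memory changes only at
events, `s` is a correct snapshot, and `t_max` is a time such that every region's
acquisition time is at most `t_max` and no event on that region happens strictly
after the acquisition time and up to `t_max`, then `s` satisfies
quasi-instantaneous consistency (witnessed by `t_max`). -/
theorem realtimeClock_criterion_sufficient
    (R V E : Type*) (m : R → ℕ → V)
    (reg : E → R) (rt : E → ℕ)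
    (hchange : ∀ (r : R) (t : ℕ), m r (t + 1) ≠ m r t →
      ∃ e : E, reg e = r ∧ rt e = t + 1)
    (s : R → V × ℕ)
    (hcorrect : ∀ r, (s r).1 = m r (s r).2)
    (tmax : ℕ)
    (hle : ∀ r, (s r).2 ≤ tmax)
    (hnoev : ∀ r, ¬ ∃ e : E, reg e = r ∧ (s r).2 < rt e ∧ rt e ≤ tmax) :
    ∀ r, (s r).1 = m r tmax := fun r =>
  (hcorrect r).trans (memory_eq_of_no_event_between hchange (hle r) (hnoev r)).symm
end
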